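/- The inversion R is an involution: for every (x,t) ∈ ℋ with (x,t) ≠ (0,0), one has R(x,t) ≠ (0,0) and R(R(x,t)) = (x,t). -/

import Mathlib

open scoped BigOperators
open Matrix

noncomputable section

namespace OC

/-- Octonions, identified with ℝ⁸. -/
abbrev Octo : Type := Fin 8 → ℝ

/-- The seven positively-oriented triples Ω. -/
def OmegaT : List (Fin 8 × Fin 8 × Fin 8) :=
  [(1,2,3),(2,4,6),(4,3,5),(3,6,7),(6,5,1),(5,7,2),(7,1,4)]

/-- The six permutations of a triple, with their signs. -/
def signedPerms3 (t : Fin 8 × Fin 8 × Fin 8) : List (ℝ × (Fin 8 × Fin 8 × Fin 8)) :=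
  [(1,(t.1,t.2.1,t.2.2)), (1,(t.2.1,t.2.2,t.1)), (1,(t.2.2,t.1,t.2.1)),
   (-1,(t.2.1,t.1,t.2.2)), (-1,(t.1,t.2.2,t.2.1)), (-1,(t.2.2,t.2.1,t.1))]

/-- The totally antisymmetric symbol ε with ε(α,β,γ) = 1 on Ω and vanishing on triples
that are not permutations of a triple of Ω. -/
def eps (a b c : Fin 8) : ℝ :=
  (((OmegaT.map signedPerms3).flatten).map (fun p => if p.2 = (a,b,c) then p.1 else 0)).sum

/-- Coefficient of `e d` in the product `e a * e b`: `e 0` is a two-sided unit and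
`e α * e β = -δ_{αβ} e 0 + ∑ γ, ε(α,β,γ) e γ` for imaginary indices. -/
def mulCoef (a b d : Fin 8) : ℝ :=
  if a = 0 then (if d = b then 1 else 0)
  else if b = 0 then (if d = a then 1 else 0)
  else (if a = b ∧ d = 0 then -1 else 0) + eps a b d

/-- Octonion multiplication on ℝ⁸. -/
def omul (x y : Octo) : Octo := fun d => ∑ a, ∑ b, x a * y b * mulCoef a b d

/-- The standard basis octonions e₀,…,e₇. -/
def e (a : Fin 8) : Octo := fun d => if d = a then 1 else 0

/-- Real part. -/
def reO (x : Octo) : ℝ := x 0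

/-- Imaginary part. -/
def imO (x : Octo) : Octo := fun d => if d = 0 then 0 else x d

/-- Octonion conjugation. -/
def conjO (x : Octo) : Octo := fun d => if d = 0 then x 0 else -x d

/-- Squared Euclidean norm |x|². -/
def normSq (x : Octo) : ℝ := ∑ a, (x a)^2

/-- Inverse of a nonzero octonion, q⁻¹ = q̄ / |q|². -/
def oinv (q : Octo) : Octo := (normSq q)⁻¹ • conjO q

/-- The seven quadruples Λ. -/
def LambdaT : List (Fin 8 × Fin 8 × Fin 8 × Fin 8) :=
  [(5,4,6,7),(7,3,5,1),(1,6,7,2),(2,5,1,4),(4,7,2,3),(3,1,4,6),(6,2,5,3)]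

/-- The 24 permutations of a quadruple, with their signs. -/
def signedPerms4 (t : Fin 8 × Fin 8 × Fin 8 × Fin 8) :
    List (ℝ × (Fin 8 × Fin 8 × Fin 8 × Fin 8)) :=
  let a := t.1; let b := t.2.1; let c := t.2.2.1; let d := t.2.2.2
  [ (1,(a,b,c,d)), (-1,(a,b,d,c)), (-1,(a,c,b,d)), (1,(a,c,d,b)), (1,(a,d,b,c)), (-1,(a,d,c,b)),
    (-1,(b,a,c,d)), (1,(b,a,d,c)), (1,(b,c,a,d)), (-1,(b,c,d,a)), (-1,(b,d,a,c)), (1,(b,d,c,a)),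
    (1,(c,a,b,d)), (-1,(c,a,d,b)), (-1,(c,b,a,d)), (1,(c,b,d,a)), (1,(c,d,a,b)), (-1,(c,d,b,a)),
    (-1,(d,a,b,c)), (1,(d,a,c,b)), (1,(d,b,a,c)), (-1,(d,b,c,a)), (-1,(d,c,a,b)), (1,(d,c,b,a)) ]

/-- The totally antisymmetric symbol ε₄ with value 1 on Λ and vanishing on quadruples
that are not permutations of a quadruple of Λ. -/
def eps4 (a b c d : Fin 8) : ℝ :=
  (((LambdaT.map signedPerms4).flatten).map (fun p => if p.2 = (a,b,c,d) then p.1 else 0)).sum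

/-- Matrix of left multiplication by `e a`: `(Imat a) d c` is the coefficient of `e d` in
`e a * e c`. -/
def Imat (a : Fin 8) : Matrix (Fin 8) (Fin 8) ℝ := Matrix.of fun d c => mulCoef a c d

/-- Octonionic Heisenberg group multiplication on 𝕆 × Im 𝕆 (realized inside 𝕆 × 𝕆):
`(x,t)·(y,s) = (x+y, t+s+2 Im(x ȳ))`. -/
def hmul (p q : Octo × Octo) : Octo × Octo :=
  (p.1 + q.1, p.2 + q.2 + (2:ℝ) • imO (omul p.1 (conjO q.1)))

/-- Group inverse in the octonionic Heisenberg group. -/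
def hinv (p : Octo × Octo) : Octo × Octo := (-p.1, -p.2)

/-- Homogeneous norm ‖(x,t)‖ = (|x|⁴+|t|²)^{1/4}. -/
def hnorm (p : Octo × Octo) : ℝ := ((normSq p.1)^2 + normSq p.2) ^ ((1:ℝ)/4)

/-- The inversion R(x,t) = (−((|x|²e₀ − t)⁻¹)x, −t/(|x|⁴+|t|²)). -/
def Rmap (p : Octo × Octo) : Octo × Octo :=
  (-(omul (oinv (normSq p.1 • e 0 - p.2)) p.1),
   -(((normSq p.1)^2 + normSq p.2)⁻¹ • p.2))

/-- E^β = I_β for β ∈ {1,…,7}, indexed here by `Fin 7` via `β ↦ β+1`. -/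
def E7 (β : Fin 7) : Matrix (Fin 8) (Fin 8) ℝ := Imat β.succ

/-- Octonionic Heisenberg group multiplication in ℝ⁸ × ℝ⁷ coordinates. -/
def hmulC (p q : (Fin 8 → ℝ) × (Fin 7 → ℝ)) : (Fin 8 → ℝ) × (Fin 7 → ℝ) :=
  (p.1 + q.1, fun β => p.2 β + q.2 β + 2 * ∑ a, ∑ b, E7 β a b * p.1 a * q.1 b)

/-- The left-invariant horizontal vector fields
`X_a = ∂/∂x_a + 2 ∑_{β,b} (E^β)_{ba} x_b ∂/∂t_β`. -/
def Xop (a : Fin 8) (f : ((Fin 8 → ℝ) × (Fin 7 → ℝ)) → ℝ)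
    (p : (Fin 8 → ℝ) × (Fin 7 → ℝ)) : ℝ :=
  fderiv ℝ f p ((Pi.single a 1 : Fin 8 → ℝ), (0 : Fin 7 → ℝ))
    + 2 * ∑ β : Fin 7, ∑ b : Fin 8,
        E7 β b a * p.1 b * fderiv ℝ f p ((0 : Fin 8 → ℝ), (Pi.single β 1 : Fin 7 → ℝ))

/-- ρ(x,t) = |x|⁴ + |t|². -/
def rho (p : (Fin 8 → ℝ) × (Fin 7 → ℝ)) : ℝ :=
  (∑ a, (p.1 a)^2)^2 + ∑ β, (p.2 β)^2

/-! The inversion is `R(x,t) = (-q⁻¹x, -t/|q|²)` with `q = |x|²e₀ - t`, since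
`|q|² = |x|⁴ + |t|²` for imaginary `t`. A short computation gives
`|R(x,t).1|²e₀ - R(x,t).2 = q̄/|q|² = q⁻¹`, so applying `R` twice multiplies `x` by `q q⁻¹`
and `t` by `|q|²/|q|²`. The only octonionic input is `q(q̄x) = |q|²x` (alternativity), together
with `|xy| = |x||y|`. -/

lemma omul_eq (x y : Octo) : omul x y =
    ![x 0 * y 0 - x 1 * y 1 - x 2 * y 2 - x 3 * y 3 - x 4 * y 4 - x 5 * y 5 - x 6 * y 6 - x 7 * y 7,
      x 0 * y 1 + x 1 * y 0 + x 2 * y 3 - x 3 * y 2 + x 4 * y 7 - x 5 * y 6 + x 6 * y 5 - x 7 * y 4,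
      x 0 * y 2 - x 1 * y 3 + x 2 * y 0 + x 3 * y 1 + x 4 * y 6 + x 5 * y 7 - x 6 * y 4 - x 7 * y 5,
      x 0 * y 3 + x 1 * y 2 - x 2 * y 1 + x 3 * y 0 - x 4 * y 5 + x 5 * y 4 + x 6 * y 7 - x 7 * y 6,
      x 0 * y 4 - x 1 * y 7 - x 2 * y 6 + x 3 * y 5 + x 4 * y 0 - x 5 * y 3 + x 6 * y 2 + x 7 * y 1,
      x 0 * y 5 + x 1 * y 6 - x 2 * y 7 - x 3 * y 4 + x 4 * y 3 + x 5 * y 0 - x 6 * y 1 + x 7 * y 2,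
      x 0 * y 6 - x 1 * y 5 + x 2 * y 4 - x 3 * y 7 - x 4 * y 2 + x 5 * y 1 + x 6 * y 0 + x 7 * y 3,
      x 0 * y 7 + x 1 * y 4 + x 2 * y 5 + x 3 * y 6 - x 4 * y 1 - x 5 * y 2 - x 6 * y 3 + x 7 * y 0] := by
  ext d
  fin_cases d <;>
    simp +decide [omul, Fin.sum_univ_eight, mulCoef, eps, OmegaT, signedPerms3] <;>
    ring

lemma omul_smul_left (c : ℝ) (x y : Octo) : omul (c • x) y = c • omul x y := by
  ext d
  simp only [omul, Pi.smul_apply, smul_eq_mul, Finset.mul_sum]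
  exact Finset.sum_congr rfl fun _ _ => Finset.sum_congr rfl fun _ _ => by ring

lemma omul_smul_right (c : ℝ) (x y : Octo) : omul x (c • y) = c • omul x y := by
  ext d
  simp only [omul, Pi.smul_apply, smul_eq_mul, Finset.mul_sum]
  exact Finset.sum_congr rfl fun _ _ => Finset.sum_congr rfl fun _ _ => by ring

lemma omul_zero (x : Octo) : omul x 0 = 0 := by
  ext d
  simp [omul]

lemma omul_neg_right (x y : Octo) : omul x (-y) = -omul x y := by
  ext d
  simp [omul]

lemma omul_conjO_omul (q x : Octo) : omul q (omul (conjO q) x) = normSq q • x := by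
  rw [omul_eq, omul_eq]
  ext d
  fin_cases d <;> simp [conjO, normSq, Fin.sum_univ_eight] <;> ring

lemma normSq_nonneg (v : Octo) : 0 ≤ normSq v :=
  Finset.sum_nonneg fun _ _ => sq_nonneg _

lemma normSq_eq_zero {v : Octo} : normSq v = 0 ↔ v = 0 := by
  simp [normSq, Finset.sum_eq_zero_iff_of_nonneg fun a _ => sq_nonneg (v a), funext_iff]

lemma normSq_smul (c : ℝ) (v : Octo) : normSq (c • v) = c ^ 2 * normSq v := by
  simp [normSq, Finset.mul_sum, mul_pow]

lemma normSq_neg (v : Octo) : normSq (-v) = normSq v := by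
  simp [normSq]

lemma normSq_conjO (v : Octo) : normSq (conjO v) = normSq v := by
  simp [normSq, conjO, Fin.sum_univ_eight]

lemma normSq_omul (x y : Octo) : normSq (omul x y) = normSq x * normSq y := by
  simp [omul_eq, normSq, Fin.sum_univ_eight]
  ring

lemma conjO_smul (c : ℝ) (v : Octo) : conjO (c • v) = c • conjO v := by
  ext d
  by_cases hd : d = 0 <;> simp [conjO, hd]

lemma conjO_conjO (v : Octo) : conjO (conjO v) = v := by
  ext d
  by_cases hd : d = 0 <;> simp [conjO, hd]

lemma normSq_oinv (q : Octo) : normSq (oinv q) = (normSq q)⁻¹ := by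
  rw [oinv, normSq_smul, normSq_conjO]
  rcases eq_or_ne (normSq q) 0 with hq | hq
  · simp [hq]
  · field_simp

lemma oinv_oinv (q : Octo) : oinv (oinv q) = q := by
  rcases eq_or_ne q 0 with rfl | hq
  · simp [oinv, normSq]
  · have hq' : normSq q ≠ 0 := mt normSq_eq_zero.mp hq
    rw [oinv, normSq_oinv, inv_inv, oinv, conjO_smul, conjO_conjO, smul_smul,
      mul_inv_cancel₀ hq', one_smul]

lemma omul_oinv_omul {q : Octo} (hq : q ≠ 0) (x : Octo) : omul q (omul (oinv q) x) = x := by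
  rw [oinv, omul_smul_left, omul_smul_right, omul_conjO_omul, smul_smul,
    inv_mul_cancel₀ (mt normSq_eq_zero.mp hq), one_smul]

/-- The octonion `q` of the inversion formula; for imaginary `p.2` its squared norm is
`hnorm p ^ 4`. -/
def gaugeOcto (p : Octo × Octo) : Octo := normSq p.1 • e 0 - p.2

lemma normSq_gaugeOcto {p : Octo × Octo} (him : p.2 0 = 0) :
    normSq (gaugeOcto p) = normSq p.1 ^ 2 + normSq p.2 := by
  simp [gaugeOcto, normSq, Fin.sum_univ_eight, e, him]
  ring

lemma conjO_gaugeOcto {p : Octo × Octo} (him : p.2 0 = 0) :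
    conjO (gaugeOcto p) = normSq p.1 • e 0 + p.2 := by
  ext d
  by_cases hd : d = 0 <;> simp [conjO, gaugeOcto, e, hd, him]

lemma gaugeOcto_ne_zero {p : Octo × Octo} (hp : p ≠ 0) (him : p.2 0 = 0) :
    gaugeOcto p ≠ 0 := by
  intro h
  rw [← normSq_eq_zero, normSq_gaugeOcto him,
    add_eq_zero_iff_of_nonneg (sq_nonneg _) (normSq_nonneg _), sq_eq_zero_iff, normSq_eq_zero,
    normSq_eq_zero] at h
  exact hp (Prod.ext h.1 h.2)

lemma Rmap_eq {p : Octo × Octo} (him : p.2 0 = 0) :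
    Rmap p = (-omul (oinv (gaugeOcto p)) p.1, -((normSq (gaugeOcto p))⁻¹ • p.2)) := by
  rw [normSq_gaugeOcto him]
  rfl

lemma Rmap_snd_apply_zero {p : Octo × Octo} (him : p.2 0 = 0) : (Rmap p).2 0 = 0 := by
  simp [Rmap, him]

lemma gaugeOcto_Rmap {p : Octo × Octo} (him : p.2 0 = 0) :
    gaugeOcto (Rmap p) = oinv (gaugeOcto p) := by
  change normSq (Rmap p).1 • e 0 - (Rmap p).2 = _
  rw [Rmap_eq him, normSq_neg, normSq_omul, normSq_oinv, sub_neg_eq_add, oinv, conjO_gaugeOcto him,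
    smul_add, smul_smul]

lemma Rmap_zero : Rmap 0 = 0 := by
  simp [Rmap, omul_zero]

/-- The inversion R is an involution on ℋ ∖ {(0,0)}. -/
theorem Rmap_involution (p : Octo × Octo) (hp : p ≠ 0) (him : p.2 0 = 0) :
    Rmap p ≠ 0 ∧ Rmap (Rmap p) = p := by
  have hq : gaugeOcto p ≠ 0 := gaugeOcto_ne_zero hp him
  have hRR : Rmap (Rmap p) = p := by
    rw [Rmap_eq (Rmap_snd_apply_zero him), gaugeOcto_Rmap him, oinv_oinv, normSq_oinv, inv_inv,
      Rmap_eq him]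
    ext1
    · rw [omul_neg_right, neg_neg, omul_oinv_omul hq]
    · rw [smul_neg, neg_neg, smul_smul, mul_inv_cancel₀ (mt normSq_eq_zero.mp hq), one_smul]
  refine ⟨fun h0 => hp ?_, hRR⟩
  rw [← hRR, h0, Rmap_zero]

end OC
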